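/- arXiv:1909.13222 — 2 statements merged into one kernel-verified Lean document; each statement's English description precedes it below -/
import Mathlib

section
/- Let E and F be Banach lattices. Let K^r denote the set of AM-σ-un-compact continuous linear operators T : E → F for which there exists a positive AM-σ-un-compact continuous linear operator S with −S ≤ T ≤ S, and for T ∈ K^r set ν(T) = inf{‖S‖ : S positive, AM-σ-un-compact, −S ≤ T ≤ S}. Suppose T_n, T ∈ K^r, ν(T_n − T) → 0, and each T_n has a modulus |T_n| (a least upper bound of T_n and −T_n in the operator order). Then T has a modulus |T|, and ν(|T_n| − |T|) → 0. -/
open Filter Topology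

section Defs

variable {F : Type*} [NormedAddCommGroup F] [Lattice F] [HasSolidNorm F] [IsOrderedAddMonoid F] [NormedSpace ℝ F]

/-- A sequence `y` un-converges to `y₀`: for every `u ≥ 0`, `‖|y n - y₀| ⊓ u‖ → 0`. -/
def UnTendsto (y : ℕ → F) (y₀ : F) : Prop :=
  ∀ u : F, 0 ≤ u → Tendsto (fun n => ‖|y n - y₀| ⊓ u‖) atTop (nhds 0)

/-- A sequence `y` uaw-converges to `y₀`: for every `u ≥ 0` and every positive continuous
linear functional `f`, `f (|y n - y₀| ⊓ u) → 0`. -/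
def UawTendsto (y : ℕ → F) (y₀ : F) : Prop :=
  ∀ u : F, 0 ≤ u → ∀ f : F →L[ℝ] ℝ, (∀ z : F, 0 ≤ z → 0 ≤ f z) →
    Tendsto (fun n => f (|y n - y₀| ⊓ u)) atTop (nhds 0)

/-- A set is relatively sequentially un-compact: every sequence in it has a subsequence
un-converging to some element of `F`. -/
def RelSeqUnCompact (A : Set F) : Prop :=
  ∀ y : ℕ → F, (∀ n, y n ∈ A) →
    ∃ (z : F) (φ : ℕ → ℕ), StrictMono φ ∧ UnTendsto (fun n => y (φ n)) z

/-- A set is relatively sequentially uaw-compact: every sequence in it has a subsequence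
uaw-converging to some element of `F`. -/
def RelSeqUawCompact (A : Set F) : Prop :=
  ∀ y : ℕ → F, (∀ n, y n ∈ A) →
    ∃ (z : F) (φ : ℕ → ℕ), StrictMono φ ∧ UawTendsto (fun n => y (φ n)) z

end Defs

section OpDefs

variable {E F : Type*} [NormedAddCommGroup E] [Lattice E] [HasSolidNorm E] [IsOrderedAddMonoid E] [NormedSpace ℝ E]
  [NormedAddCommGroup F] [Lattice F] [HasSolidNorm F] [IsOrderedAddMonoid F] [NormedSpace ℝ F]

/-- `T` is AM-σ-un-compact: the image of every order interval `[-x, x]` (`x ≥ 0`) is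
relatively sequentially un-compact. -/
def AMSigmaUnCompact (T : E →L[ℝ] F) : Prop :=
  ∀ x : E, 0 ≤ x → RelSeqUnCompact (T '' Set.Icc (-x) x)

/-- `T` is o-σ-uaw-compact: the image of every order interval `[-x, x]` (`x ≥ 0`) is
relatively sequentially uaw-compact. -/
def OSigmaUawCompact (T : E →L[ℝ] F) : Prop :=
  ∀ x : E, 0 ≤ x → RelSeqUawCompact (T '' Set.Icc (-x) x)

/-- Operator order: `OpLE S T` iff `(T - S) x ≥ 0` for all `x ≥ 0`. -/
def OpLE (S T : E →L[ℝ] F) : Prop := ∀ x : E, 0 ≤ x → S x ≤ T x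

end OpDefs

/-- `T` belongs to `K^r`: `T` is AM-σ-un-compact and is dominated by a positive
AM-σ-un-compact operator. -/
def KrAMUn {E F : Type*} [NormedAddCommGroup E] [Lattice E] [HasSolidNorm E] [IsOrderedAddMonoid E] [NormedSpace ℝ E]
    [NormedAddCommGroup F] [Lattice F] [HasSolidNorm F] [IsOrderedAddMonoid F] [NormedSpace ℝ F] (T : E →L[ℝ] F) : Prop :=
  AMSigmaUnCompact T ∧
    ∃ S : E →L[ℝ] F, OpLE 0 S ∧ AMSigmaUnCompact S ∧ OpLE (-S) T ∧ OpLE T S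

/-- The AM-un-norm `ν(T) = inf {‖S‖ : S positive, AM-σ-un-compact, -S ≤ T ≤ S}`. -/
noncomputable def nuAMUn {E F : Type*} [NormedAddCommGroup E] [Lattice E] [HasSolidNorm E] [IsOrderedAddMonoid E] [NormedSpace ℝ E]
    [NormedAddCommGroup F] [Lattice F] [HasSolidNorm F] [IsOrderedAddMonoid F] [NormedSpace ℝ F] (T : E →L[ℝ] F) : ℝ :=
  sInf {c : ℝ | ∃ S : E →L[ℝ] F,
    OpLE 0 S ∧ AMSigmaUnCompact S ∧ OpLE (-S) T ∧ OpLE T S ∧ ‖S‖ = c}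

/-- `M` is the modulus of `T`: the least upper bound of `T` and `-T` in the operator
order. -/
def IsModulus {E F : Type*} [NormedAddCommGroup E] [Lattice E] [HasSolidNorm E] [IsOrderedAddMonoid E] [NormedSpace ℝ E]
    [NormedAddCommGroup F] [Lattice F] [HasSolidNorm F] [IsOrderedAddMonoid F] [NormedSpace ℝ F] (T M : E →L[ℝ] F) : Prop :=
  OpLE T M ∧ OpLE (-T) M ∧ ∀ R : E →L[ℝ] F, OpLE T R → OpLE (-T) R → OpLE M R

variable {E F : Type*}
  [NormedAddCommGroup E] [Lattice E] [HasSolidNorm E] [IsOrderedAddMonoid E] [NormedSpace ℝ E] [CompleteSpace E]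
  [NormedAddCommGroup F] [Lattice F] [HasSolidNorm F] [IsOrderedAddMonoid F] [NormedSpace ℝ F] [CompleteSpace F]

/-!
Choose positive AM-σ-un-compact majorants `S n` of `±(T n - T)` with `‖S n‖ → 0`. The
inequality `||A| - |B|| ≤ |A - B|` for moduli makes `|T n|` Cauchy in operator norm; since the
order of `F` is closed, its limit `M` is a modulus of `T`, and the same inequality gives
`-S n ≤ |T n| - M ≤ S n`, whence `ν(|T n| - M) ≤ ‖S n‖`.
-/

section Lattice

variable {F : Type*} [NormedAddCommGroup F] [Lattice F]

theorem add_inf_le_inf_add_inf [IsOrderedAddMonoid F] {a b u : F} (ha : 0 ≤ a) (hb : 0 ≤ b)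
    (hu : 0 ≤ u) : (a + b) ⊓ u ≤ a ⊓ u + b ⊓ u := by
  rw [inf_add, add_inf, add_inf]
  refine le_inf (le_inf inf_le_left ?_) (le_inf ?_ ?_)
  · exact inf_le_right.trans (le_add_of_nonneg_left ha)
  · exact inf_le_right.trans (le_add_of_nonneg_right hb)
  · exact inf_le_right.trans (le_add_of_nonneg_right hu)

theorem UnTendsto.add [HasSolidNorm F] [IsOrderedAddMonoid F] {y w : ℕ → F} {y₀ w₀ : F}
    (hy : UnTendsto y y₀) (hw : UnTendsto w w₀) : UnTendsto (fun n => y n + w n) (y₀ + w₀) := by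
  intro u hu
  refine squeeze_zero (fun n => norm_nonneg _) (fun n => ?_)
    (by simpa using (hy u hu).add (hw u hu))
  have hsplit : |y n + w n - (y₀ + w₀)| ⊓ u ≤ |y n - y₀| ⊓ u + |w n - w₀| ⊓ u := by
    rw [add_sub_add_comm]
    exact (inf_le_inf_right u (abs_add_le _ _)).trans
      (add_inf_le_inf_add_inf (abs_nonneg _) (abs_nonneg _) hu)
  calc ‖|y n + w n - (y₀ + w₀)| ⊓ u‖
      ≤ ‖|y n - y₀| ⊓ u + |w n - w₀| ⊓ u‖ :=
        HasSolidNorm.solid (abs_le_abs_of_nonneg (le_inf (abs_nonneg _) hu) hsplit)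
    _ ≤ ‖|y n - y₀| ⊓ u‖ + ‖|w n - w₀| ⊓ u‖ := norm_add_le _ _

theorem UnTendsto.comp_strictMono {y : ℕ → F} {y₀ : F} (hy : UnTendsto y y₀)
    {φ : ℕ → ℕ} (hφ : StrictMono φ) : UnTendsto (fun n => y (φ n)) y₀ := fun u hu =>
  (hy u hu).comp hφ.tendsto_atTop

end Lattice

theorem cauchySeq_of_dist_le_add {X : Type*} [PseudoMetricSpace X] {s : ℕ → X} {a : ℕ → ℝ}
    (h : ∀ n m, dist (s n) (s m) ≤ a n + a m) (ha : Tendsto a atTop (𝓝 0)) : CauchySeq s := by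
  refine Metric.cauchySeq_iff'.2 fun ε hε => ?_
  obtain ⟨N, hN⟩ := (ha.eventually (gt_mem_nhds (half_pos hε))).exists_forall_of_atTop
  refine ⟨N, fun n hn => ?_⟩
  calc dist (s n) (s N) ≤ a n + a N := h n N
    _ < ε / 2 + ε / 2 := add_lt_add (hN n hn) (hN N le_rfl)
    _ = ε := add_halves ε

section Operators

variable {E F : Type*} [NormedAddCommGroup E] [Lattice E] [NormedSpace ℝ E]
  [NormedAddCommGroup F] [Lattice F] [NormedSpace ℝ F]

theorem AMSigmaUnCompact.add [HasSolidNorm F] [IsOrderedAddMonoid F] {S₁ S₂ : E →L[ℝ] F}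
    (h₁ : AMSigmaUnCompact S₁) (h₂ : AMSigmaUnCompact S₂) : AMSigmaUnCompact (S₁ + S₂) := by
  intro x hx y hy
  choose a ha hay using hy
  obtain ⟨z₁, φ, hφ, hz₁⟩ := h₁ x hx (fun n => S₁ (a n)) (fun n => ⟨a n, ha n, rfl⟩)
  obtain ⟨z₂, ψ, hψ, hz₂⟩ := h₂ x hx (fun n => S₂ (a (φ n))) (fun n => ⟨a (φ n), ha _, rfl⟩)
  refine ⟨z₁ + z₂, φ ∘ ψ, hφ.comp hψ, ?_⟩
  simp only [Function.comp_apply, ← hay, add_apply]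
  exact (hz₁.comp_strictMono hψ).add hz₂

theorem opLE_of_tendsto [HasSolidNorm F] [IsOrderedAddMonoid F] {A B : ℕ → E →L[ℝ] F}
    {A₀ B₀ : E →L[ℝ] F} (hA : Tendsto A atTop (𝓝 A₀)) (hB : Tendsto B atTop (𝓝 B₀))
    (h : ∀ n, OpLE (A n) (B n)) : OpLE A₀ B₀ := fun x hx =>
  le_of_tendsto_of_tendsto' ((ContinuousLinearMap.apply ℝ F x).continuous.tendsto A₀ |>.comp hA)
    ((ContinuousLinearMap.apply ℝ F x).continuous.tendsto B₀ |>.comp hB) fun n => h n x hx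

def OpAbsLE (X S : E →L[ℝ] F) : Prop := OpLE (-S) X ∧ OpLE X S

theorem OpAbsLE.neg [IsOrderedAddMonoid F] {X S : E →L[ℝ] F} (h : OpAbsLE X S) :
    OpAbsLE (-X) S := by
  refine ⟨fun x hx => ?_, fun x hx => ?_⟩
  · simpa using neg_le_neg (h.2 x hx)
  · simpa using neg_le.1 (h.1 x hx)

theorem OpAbsLE.add [IsOrderedAddMonoid F] {X Y S S' : E →L[ℝ] F} (hX : OpAbsLE X S)
    (hY : OpAbsLE Y S') : OpAbsLE (X + Y) (S + S') := by
  refine ⟨fun x hx => ?_, fun x hx => ?_⟩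
  · calc (-(S + S')) x = (-S) x + (-S') x := by simp only [neg_apply, add_apply, neg_add]
      _ ≤ X x + Y x := add_le_add (hX.1 x hx) (hY.1 x hx)
  · exact add_le_add (hX.2 x hx) (hY.2 x hx)

theorem OpAbsLE.sub [IsOrderedAddMonoid F] {X Y S S' : E →L[ℝ] F} (hX : OpAbsLE X S)
    (hY : OpAbsLE Y S') : OpAbsLE (X - Y) (S + S') := by
  simpa [sub_eq_add_neg] using hX.add hY.neg

/-- `S` is one of the operators over which the infimum defining `nuAMUn X` is taken. -/
def IsAMUnMajorant (X S : E →L[ℝ] F) : Prop :=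
  OpLE 0 S ∧ AMSigmaUnCompact S ∧ OpAbsLE X S

theorem IsAMUnMajorant.sub [HasSolidNorm F] [IsOrderedAddMonoid F] {X Y S S' : E →L[ℝ] F}
    (hX : IsAMUnMajorant X S) (hY : IsAMUnMajorant Y S') : IsAMUnMajorant (X - Y) (S + S') :=
  ⟨fun x hx => by simpa using add_nonneg (hX.1 x hx) (hY.1 x hx), hX.2.1.add hY.2.1,
    hX.2.2.sub hY.2.2⟩

variable [HasSolidNorm E] [IsOrderedAddMonoid E] [HasSolidNorm F] [IsOrderedAddMonoid F]

theorem OpAbsLE.norm_le {X S : E →L[ℝ] F} (h : OpAbsLE X S) : ‖X‖ ≤ ‖S‖ := by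
  have habs : ∀ y, 0 ≤ y → |X y| ≤ S y := fun y hy =>
    abs_le'.2 ⟨h.2 y hy, neg_le.1 (h.1 y hy)⟩
  refine X.opNorm_le_bound (norm_nonneg S) fun x => ?_
  have key : |X x| ≤ S |x| := calc
    |X x| = |X x⁺ - X x⁻| := by rw [← map_sub, posPart_sub_negPart]
    _ ≤ |X x⁺| + |X x⁻| := by rw [sub_eq_add_neg, ← abs_neg (X x⁻)]; exact abs_add_le _ _
    _ ≤ S x⁺ + S x⁻ := add_le_add (habs _ (posPart_nonneg x)) (habs _ (negPart_nonneg x))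
    _ = S |x| := by rw [← map_add, posPart_add_negPart]
  calc ‖X x‖ = ‖|X x|‖ := (norm_abs_eq_norm _).symm
    _ ≤ ‖S |x|‖ := HasSolidNorm.solid (abs_le_abs_of_nonneg (abs_nonneg _) key)
    _ ≤ ‖S‖ * ‖|x|‖ := S.le_opNorm _
    _ = ‖S‖ * ‖x‖ := by rw [norm_abs_eq_norm]

theorem KrAMUn.exists_isAMUnMajorant {X : E →L[ℝ] F} (h : KrAMUn X) :
    ∃ S, IsAMUnMajorant X S :=
  let ⟨_, S, hpos, hc, hl, hu⟩ := h
  ⟨S, hpos, hc, hl, hu⟩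

theorem nuAMUn_nonneg (X : E →L[ℝ] F) : 0 ≤ nuAMUn X :=
  Real.sInf_nonneg <| by rintro c ⟨S, -, -, -, -, rfl⟩; exact norm_nonneg S

theorem IsAMUnMajorant.nuAMUn_le {X S : E →L[ℝ] F} (h : IsAMUnMajorant X S) :
    nuAMUn X ≤ ‖S‖ :=
  csInf_le ⟨0, by rintro c ⟨S, -, -, -, -, rfl⟩; exact norm_nonneg S⟩
    ⟨S, h.1, h.2.1, h.2.2.1, h.2.2.2, rfl⟩

theorem exists_isAMUnMajorant_norm_lt {X S : E →L[ℝ] F} (h : IsAMUnMajorant X S) {ε : ℝ}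
    (hε : 0 < ε) : ∃ S', IsAMUnMajorant X S' ∧ ‖S'‖ < nuAMUn X + ε := by
  obtain ⟨c, ⟨S', hpos, hc, hl, hu, rfl⟩, hlt⟩ :=
    exists_lt_of_csInf_lt (by exact ⟨‖S‖, S, h.1, h.2.1, h.2.2.1, h.2.2.2, rfl⟩)
      (lt_add_of_pos_right (nuAMUn X) hε)
  exact ⟨S', ⟨hpos, hc, hl, hu⟩, hlt⟩

theorem exists_isAMUnMajorant_seq_tendsto_zero {X : ℕ → E →L[ℝ] F}
    (hX : ∀ n, ∃ S, IsAMUnMajorant (X n) S)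
    (hlim : Tendsto (fun n => nuAMUn (X n)) atTop (𝓝 0)) :
    ∃ S : ℕ → E →L[ℝ] F, (∀ n, IsAMUnMajorant (X n) (S n)) ∧
      Tendsto (fun n => ‖S n‖) atTop (𝓝 0) := by
  choose S hS hlt using fun n =>
    exists_isAMUnMajorant_norm_lt (hX n).choose_spec (Nat.one_div_pos_of_nat (n := n))
  refine ⟨S, hS, squeeze_zero (fun n => norm_nonneg _) (fun n => (hlt n).le) ?_⟩
  simpa using hlim.add tendsto_one_div_add_atTop_nhds_zero_nat

theorem IsModulus.opLE_add {A B MA R S : E →L[ℝ] F} (hA : IsModulus A MA)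
    (hAB : OpAbsLE (A - B) S) (hR : OpLE B R) (hR' : OpLE (-B) R) : OpLE MA (R + S) := by
  refine hA.2.2 _ (fun x hx => ?_) (fun x hx => ?_)
  · calc A x = B x + (A - B) x := by rw [sub_apply, add_sub_cancel]
      _ ≤ R x + S x := add_le_add (hR x hx) (hAB.2 x hx)
  · calc (-A) x = (-B) x + -(A - B) x := by simp only [neg_apply, sub_apply]; abel
      _ ≤ R x + S x := add_le_add (hR' x hx) (neg_le.1 (hAB.1 x hx))

/-- `||A| - |B|| ≤ |A - B|` for moduli in the operator order. -/
theorem IsModulus.opAbsLE_sub {A B MA MB S : E →L[ℝ] F} (hA : IsModulus A MA)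
    (hB : IsModulus B MB) (hAB : OpAbsLE (A - B) S) : OpAbsLE (MA - MB) S := by
  have hBA : OpAbsLE (B - A) S := by simpa using hAB.neg
  have h₁ := hA.opLE_add hAB hB.1 hB.2.1
  have h₂ := hB.opLE_add hBA hA.1 hA.2.1
  refine ⟨fun x hx => ?_, fun x hx => ?_⟩
  · simpa [le_sub_iff_add_le, add_comm] using (h₂ x hx)
  · simpa [sub_le_iff_le_add, add_comm] using (h₁ x hx)

end Operators

/-- If `T_n, T ∈ K^r`, `ν(T_n - T) → 0` and each `T_n` has a modulus, then `T` has a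
modulus and `ν(|T_n| - |T|) → 0`. -/
theorem modulus_of_nu_tendsto
    (Tn : ℕ → E →L[ℝ] F) (T : E →L[ℝ] F)
    (hTn : ∀ n, KrAMUn (Tn n)) (hT : KrAMUn T)
    (hlim : Tendsto (fun n => nuAMUn (Tn n - T)) atTop (nhds 0))
    (Mn : ℕ → E →L[ℝ] F) (hMn : ∀ n, IsModulus (Tn n) (Mn n)) :
    ∃ M : E →L[ℝ] F, IsModulus T M ∧
      Tendsto (fun n => nuAMUn (Mn n - M)) atTop (nhds 0) := by
  obtain ⟨S, hS, hS0⟩ := exists_isAMUnMajorant_seq_tendsto_zero (fun n => by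
    obtain ⟨Sn, hSn⟩ := (hTn n).exists_isAMUnMajorant
    obtain ⟨S₀, hS₀⟩ := hT.exists_isAMUnMajorant
    exact ⟨_, hSn.sub hS₀⟩) hlim
  have hdom n : OpAbsLE (Tn n - T) (S n) := (hS n).2.2
  have hTlim : Tendsto Tn atTop (𝓝 T) := tendsto_iff_norm_sub_tendsto_zero.2 <|
    squeeze_zero (fun _ => norm_nonneg _) (fun n => (hdom n).norm_le) hS0
  have hSlim : Tendsto S atTop (𝓝 0) := tendsto_zero_iff_norm_tendsto_zero.2 hS0
  have hCauchy : CauchySeq Mn := cauchySeq_of_dist_le_add (fun n m => by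
    have hnm : OpAbsLE (Tn n - Tn m) (S n + S m) := by
      simpa using (hdom n).sub (hdom m)
    rw [dist_eq_norm]
    exact ((hMn n).opAbsLE_sub (hMn m) hnm).norm_le.trans (norm_add_le _ _)) hS0
  obtain ⟨M, hM⟩ := cauchySeq_tendsto_of_complete hCauchy
  have hMT : IsModulus T M :=
    ⟨opLE_of_tendsto hTlim hM fun n => (hMn n).1,
      opLE_of_tendsto hTlim.neg hM fun n => (hMn n).2.1,
      fun R hR hR' => opLE_of_tendsto hM (by simpa using tendsto_const_nhds.add hSlim)
        fun n => (hMn n).opLE_add (hdom n) hR hR'⟩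
  refine ⟨M, hMT, squeeze_zero (fun n => nuAMUn_nonneg _) (fun n => ?_) hS0⟩
  exact IsAMUnMajorant.nuAMUn_le ⟨(hS n).1, (hS n).2.1, (hMn n).opAbsLE_sub hMT (hdom n)⟩
end

section
/- Let E and F be Banach lattices, and suppose there exists a positive continuous linear functional x' on E with ‖x'‖ = 1. If ‖S + T‖ = ‖S‖ + ‖T‖ holds for all positive AM-σ-un-compact continuous linear operators S, T : E → F (where ‖·‖ is the operator norm), then F is an AL-space, i.e., ‖f₁ + f₂‖ = ‖f₁‖ + ‖f₂‖ for all f₁, f₂ ∈ F with f₁, f₂ ≥ 0. (This is the necessity part, for F, of the theorem characterizing when the regular AM-σ-un-compact operators form an AL-space; it is proved by applying the hypothesis to the rank-one operators x' ⊗ f₁ and x' ⊗ f₂, where (x' ⊗ f)(x) = x'(x) • f.) -/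
open Filter Topology

/-! A rank-one operator `x ↦ x' x • f` with `x' ≥ 0`, `‖x'‖ = 1` and `f ≥ 0` is positive, has norm
`‖f‖`, and is compact, hence AM-σ-un-compact: order intervals are norm bounded, compact sets are
sequentially compact, and norm convergence implies un-convergence. Since
`x' ⊗ f₁ + x' ⊗ f₂ = x' ⊗ (f₁ + f₂)`, norm additivity on these operators is the AL-identity in `F`. -/

theorem inv_two_pow_smul_nonneg {F : Type*} [AddCommGroup F] [Lattice F] [IsOrderedAddMonoid F]
    [Module ℝ F] {f : F} (hf : 0 ≤ f) (k : ℕ) : 0 ≤ ((2 : ℝ) ^ k)⁻¹ • f := by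
  induction k with
  | zero => simpa using hf
  | succ k ih =>
    refine nsmul_two_semiclosed ?_
    rwa [two_nsmul, ← add_smul, ← two_mul, pow_succ', mul_inv, mul_inv_cancel_left₀ two_ne_zero]

section NormedLattice

variable {F : Type*} [NormedAddCommGroup F] [Lattice F] [HasSolidNorm F] [IsOrderedAddMonoid F]

theorem unTendsto_of_tendsto {y : ℕ → F} {z : F} (h : Tendsto y atTop (𝓝 z)) :
    UnTendsto y z := by
  intro u hu
  refine squeeze_zero (fun _ => norm_nonneg _) (fun n => ?_) (tendsto_iff_norm_sub_tendsto_zero.1 h)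
  calc ‖|y n - z| ⊓ u‖ ≤ ‖|y n - z|‖ :=
        norm_le_norm_of_abs_le_abs <| by
          rw [abs_of_nonneg (le_inf (abs_nonneg _) hu), abs_abs]; exact inf_le_left
    _ = ‖y n - z‖ := norm_abs_eq_norm _

theorem relSeqUnCompact_of_subset_isCompact {A K : Set F} (hAK : A ⊆ K) (hK : IsCompact K) :
    RelSeqUnCompact A := by
  intro y hy
  obtain ⟨z, -, φ, hφ, hyz⟩ := hK.tendsto_subseq fun n => hAK (hy n)
  exact ⟨z, φ, hφ, unTendsto_of_tendsto hyz⟩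

theorem isBounded_Icc_neg (x : F) : Bornology.IsBounded (Set.Icc (-x) x) := by
  refine Metric.isBounded_closedBall (x := 0) (r := ‖x‖) |>.subset fun z hz => ?_
  rw [mem_closedBall_zero_iff]
  exact norm_le_norm_of_abs_le_abs ((abs_le'.2 ⟨hz.2, neg_le.1 hz.1⟩).trans (le_abs_self x))

/- The order of `F` is not assumed compatible with the real scalar action: `0 ≤ t • f` is
reached from dyadic `t`, where it follows from the lattice-group axioms, through the closed cone. -/
theorem real_smul_nonneg [NormedSpace ℝ F] {f : F} (hf : 0 ≤ f) {t : ℝ} (ht : 0 ≤ t) :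
    0 ≤ t • f := by
  have hdyadic : ∀ k : ℕ, 0 ≤ ((⌊t * 2 ^ k⌋₊ : ℝ) / 2 ^ k) • f := fun k => by
    rw [div_eq_mul_inv, mul_smul, Nat.cast_smul_eq_nsmul]
    exact nsmul_nonneg (inv_two_pow_smul_nonneg hf k) _
  have hlim : Tendsto (fun k : ℕ => (⌊t * 2 ^ k⌋₊ : ℝ) / 2 ^ k) atTop (𝓝 t) :=
    (tendsto_nat_floor_mul_div_atTop ht).comp (tendsto_pow_atTop_atTop_of_one_lt one_lt_two)
  exact isClosed_nonneg.mem_of_tendsto (hlim.smul_const f) (Eventually.of_forall hdyadic)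

end NormedLattice

section Operators

variable {E F : Type*} [NormedAddCommGroup E] [NormedSpace ℝ E] [NormedAddCommGroup F] [NormedSpace ℝ F]

theorem isCompactOperator_smulRight (x' : E →L[ℝ] ℝ) (f : F) :
    IsCompactOperator (x'.smulRight f) :=
  (isCompactOperator_of_locallyCompactSpace_dom x').continuous_comp
    (continuous_id.smul continuous_const)

variable [Lattice E] [Lattice F] [HasSolidNorm F] [IsOrderedAddMonoid F]

theorem opLE_zero_smulRight {x' : E →L[ℝ] ℝ} (hx' : ∀ x : E, 0 ≤ x → 0 ≤ x' x) {f : F}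
    (hf : 0 ≤ f) : OpLE 0 (x'.smulRight f) :=
  fun x hx => real_smul_nonneg hf (hx' x hx)

variable [HasSolidNorm E] [IsOrderedAddMonoid E]

theorem IsCompactOperator.amSigmaUnCompact {T : E →L[ℝ] F} (hT : IsCompactOperator T) :
    AMSigmaUnCompact T := fun x _ => by
  obtain ⟨K, hK, hTK⟩ := hT.image_subset_compact_of_bounded (isBounded_Icc_neg x)
  exact relSeqUnCompact_of_subset_isCompact hTK hK

end Operators

variable {E F : Type*}
  [NormedAddCommGroup E] [Lattice E] [HasSolidNorm E] [IsOrderedAddMonoid E] [NormedSpace ℝ E] [CompleteSpace E]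
  [NormedAddCommGroup F] [Lattice F] [HasSolidNorm F] [IsOrderedAddMonoid F] [NormedSpace ℝ F] [CompleteSpace F]

/-- If there is a positive norm-one functional on `E` and the operator norm is additive
on positive AM-σ-un-compact operators, then `F` is an AL-space. -/
theorem isALSpace_of_norm_add
    (x' : E →L[ℝ] ℝ) (hx'pos : ∀ x : E, 0 ≤ x → 0 ≤ x' x) (hx'norm : ‖x'‖ = 1)
    (hadd : ∀ S T : E →L[ℝ] F, OpLE 0 S → OpLE 0 T →
      AMSigmaUnCompact S → AMSigmaUnCompact T → ‖S + T‖ = ‖S‖ + ‖T‖) :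
    ∀ f₁ f₂ : F, 0 ≤ f₁ → 0 ≤ f₂ → ‖f₁ + f₂‖ = ‖f₁‖ + ‖f₂‖ := by
  intro f₁ f₂ hf₁ hf₂
  have hnorm (f : F) : ‖x'.smulRight f‖ = ‖f‖ := by
    rw [ContinuousLinearMap.norm_smulRight_apply, hx'norm, one_mul]
  have hsum : x'.smulRight f₁ + x'.smulRight f₂ = x'.smulRight (f₁ + f₂) := by
    ext x; exact (smul_add _ _ _).symm
  have h := hadd (x'.smulRight f₁) (x'.smulRight f₂)
    (opLE_zero_smulRight hx'pos hf₁) (opLE_zero_smulRight hx'pos hf₂)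
    (isCompactOperator_smulRight x' f₁).amSigmaUnCompact
    (isCompactOperator_smulRight x' f₂).amSigmaUnCompact
  rwa [hsum, hnorm, hnorm, hnorm] at h
end
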